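/- arXiv:2004.12842 — 5 statements merged into one kernel-verified Lean document; each statement's English description precedes it below -/
import Mathlib

section
/- For every a > 0, the function x ↦ exp(−a·Arccos(x)) on [−1,1] has a power series expansion ∑_{n=0}^∞ c_n x^n (convergent on [−1,1]) with all coefficients c_n ≥ 0. -/
/-!
`f x = exp (-(a * arccos x))` solves `(1 - x ^ 2) f'' - x f' = a ^ 2 f`: under `x = cos θ` this is
`h'' = a ^ 2 h` for `h θ = exp (-(a * θ))`. Comparing coefficients gives
`(n + 1) (n + 2) cₙ₊₂ = (n ^ 2 + a ^ 2) cₙ` with `c₀ = exp (-(a * (π / 2)))` and `c₁ = a c₀`,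
so all `cₙ ≥ 0`. As `cₙ₊₂ / cₙ → 1`, the series converges on `(-1, 1)`, solves the same equation
there and has the same value and slope at `0` as `f`, hence equals `f`. With nonnegative
coefficients and `f ≤ 1`, every partial sum of `∑ cₙ` is at most `1`, so the series converges on
`[-1, 1]`, and Abel's theorem extends the identity to the endpoints.
-/

open Filter Topology Set Real

def ConvergesOnUnitBall (c : ℕ → ℝ) : Prop :=
  ∀ r : ℝ, 0 ≤ r → r < 1 → Summable fun n => |c n| * r ^ n

def derivCoeff (c : ℕ → ℝ) (n : ℕ) : ℝ := (n + 1) * c (n + 1)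

lemma tsum_mul_zero_pow (c : ℕ → ℝ) : ∑' n, c n * 0 ^ n = c 0 := by
  rw [tsum_eq_single 0 fun n hn => by simp [hn]]
  simp

namespace ConvergesOnUnitBall

variable {c : ℕ → ℝ}

lemma of_abs_le {M : ℝ} (h : ∀ n, |c n| ≤ M) : ConvergesOnUnitBall c := fun r hr0 hr1 =>
  ((summable_geometric_of_lt_one hr0 hr1).mul_left M).of_nonneg_of_le (fun n => by positivity)
    fun n => mul_le_mul_of_nonneg_right (h n) (by positivity)

lemma summable (hc : ConvergesOnUnitBall c) {x : ℝ} (hx : |x| < 1) :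
    Summable fun n => c n * x ^ n :=
  (hc |x| (abs_nonneg x) hx).of_norm_bounded fun n => by
    rw [norm_mul, norm_pow, Real.norm_eq_abs, Real.norm_eq_abs]

lemma deriv (hc : ConvergesOnUnitBall c) : ConvergesOnUnitBall (derivCoeff c) := by
  intro r hr0 hr1
  obtain ⟨s, hrs, hs1⟩ := exists_between hr1
  have hs0 : 0 < s := hr0.trans_lt hrs
  have hq : ‖r / s‖ < 1 := by
    rw [Real.norm_eq_abs, abs_of_nonneg (by positivity), div_lt_one hs0]
    exact hrs
  set M := ∑' n, |c n| * s ^ n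
  have hM : ∀ n, |c n| * s ^ n ≤ M := fun n =>
    (hc s hs0.le hs1).le_tsum n fun j _ => by positivity
  refine ((summable_descFactorial_mul_geometric_of_norm_lt_one 1 hq).mul_left (M / s))
    |>.of_nonneg_of_le (fun n => by positivity) fun n => ?_
  have hsplit : |derivCoeff c n| * r ^ n
      = (n + 1) * (r / s) ^ n * (|c (n + 1)| * s ^ (n + 1)) / s := by
    rw [derivCoeff, abs_mul, abs_of_nonneg (by positivity : (0 : ℝ) ≤ n + 1), div_pow]
    field_simp
    ring
  rw [hsplit, Nat.descFactorial_one, Nat.cast_add_one]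
  calc (n + 1) * (r / s) ^ n * (|c (n + 1)| * s ^ (n + 1)) / s
      ≤ (n + 1) * (r / s) ^ n * M / s := by gcongr; exact hM _
    _ = M / s * ((n + 1) * (r / s) ^ n) := by ring

lemma hasDerivAt (hc : ConvergesOnUnitBall c) {x : ℝ} (hx : |x| < 1) :
    HasDerivAt (fun y => ∑' n, c n * y ^ n) (∑' n, derivCoeff c n * x ^ n) x := by
  obtain ⟨r, hxr, hr1⟩ := exists_between hx
  have hr : 0 < r := (abs_nonneg x).trans_lt hxr
  have htail : HasDerivAt (fun y => ∑' n, c (n + 1) * y ^ (n + 1))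
      (∑' n, derivCoeff c n * x ^ n) x := by
    refine hasDerivAt_tsum_of_isPreconnected (g' := fun n y => derivCoeff c n * y ^ n)
      (hc.deriv r hr.le hr1) Metric.isOpen_ball (convex_ball 0 r).isPreconnected
      (fun n y _ => ?_) (fun n y hy => ?_) (Metric.mem_ball_self hr) (by simp)
      (mem_ball_zero_iff.2 hxr)
    · simpa [derivCoeff, mul_comm, mul_left_comm, mul_assoc]
        using (hasDerivAt_pow (n + 1) y).const_mul (c (n + 1))
    · rw [mem_ball_zero_iff, Real.norm_eq_abs] at hy
      rw [norm_mul, norm_pow, Real.norm_eq_abs, Real.norm_eq_abs]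
      gcongr
  have heq : (fun y => ∑' n, c n * y ^ n) =ᶠ[𝓝 x] fun y => c 0 + ∑' n, c (n + 1) * y ^ (n + 1) := by
    filter_upwards [(isOpen_lt continuous_abs continuous_const).mem_nhds hx] with y hy
    rw [(hc.summable hy).tsum_eq_zero_add]
    simp
  exact (htail.const_add (c 0)).congr_of_eventuallyEq heq

/-- `(1 - x ^ 2) D² - x D` sends `x ^ n` to `n (n - 1) x ^ (n - 2) - n ^ 2 x ^ n`. -/
lemma hasSum_chebyshev (hc : ConvergesOnUnitBall c) {x : ℝ} (hx : |x| < 1) :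
    HasSum (fun n => ((n + 1) * (n + 2) * c (n + 2) - n ^ 2 * c n) * x ^ n)
      ((1 - x ^ 2) * ∑' n, derivCoeff (derivCoeff c) n * x ^ n
        - x * ∑' n, derivCoeff c n * x ^ n) := by
  have h2 := (hc.deriv.deriv.summable hx).hasSum
  have h1 := (hc.deriv.summable hx).hasSum
  have h2' : HasSum (fun n : ℕ => n * (n - 1) * c n * x ^ n)
      (x ^ 2 * ∑' n, derivCoeff (derivCoeff c) n * x ^ n) := by
    have := (hasSum_nat_add_iff (f := fun n : ℕ => n * (n - 1) * c n * x ^ n) 2).mp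
      ((h2.mul_left (x ^ 2)).congr_fun fun n => by
        simp only [derivCoeff]
        push_cast
        ring)
    simpa [Finset.sum_range_succ] using this
  have h1' : HasSum (fun n : ℕ => n * c n * x ^ n)
      (x * ∑' n, derivCoeff c n * x ^ n) := by
    have := (hasSum_nat_add_iff (f := fun n : ℕ => n * c n * x ^ n) 1).mp
      ((h1.mul_left x).congr_fun fun n => by
        simp only [derivCoeff]
        push_cast
        ring)
    simpa using this
  rw [one_sub_mul]
  refine ((h2.sub h2').sub h1').congr_fun fun n => ?_
  simp only [derivCoeff]
  push_cast
  ring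

end ConvergesOnUnitBall

lemma bddAbove_range_of_le_two_step {α : Type*} [SemilatticeSup α] [Nonempty α] {u : ℕ → α}
    {N : ℕ} (h : ∀ n ≥ N, u (n + 2) ≤ u n) : BddAbove (range u) := by
  have hle : ∀ n, ∃ k < N + 2, u n ≤ u k := by
    intro n
    induction n using Nat.strong_induction_on with
    | _ n ih =>
      by_cases hn : n < N + 2
      · exact ⟨n, hn, le_rfl⟩
      · obtain ⟨m, rfl⟩ : ∃ m, n = m + 2 := ⟨n - 2, by omega⟩
        obtain ⟨k, hk, hmk⟩ := ih m (by omega)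
        exact ⟨k, hk, (h m (by omega)).trans hmk⟩
  obtain ⟨M, hM⟩ := ((finite_Iio (N + 2)).image u).bddAbove
  refine ⟨M, ?_⟩
  rintro _ ⟨n, rfl⟩
  obtain ⟨k, hk, hnk⟩ := hle n
  exact hnk.trans (hM ⟨k, hk, rfl⟩)

/-- The Taylor coefficients of `f x = exp (-(a * arccos x))` at `0`: `f 0 = exp (-(a * (π / 2)))`,
`f' 0 = a * f 0`, and the recurrence is the one forced by `(1 - x ^ 2) f'' - x f' = a ^ 2 f`. -/
noncomputable def expArccosCoeff (a : ℝ) : ℕ → ℝ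
  | 0 => exp (-(a * (π / 2)))
  | 1 => a * exp (-(a * (π / 2)))
  | n + 2 => (n ^ 2 + a ^ 2) / ((n + 1) * (n + 2)) * expArccosCoeff a n

lemma expArccosCoeff_nonneg {a : ℝ} (ha : 0 ≤ a) (n : ℕ) : 0 ≤ expArccosCoeff a n := by
  induction n using Nat.twoStepInduction with
  | zero => exact (exp_pos _).le
  | one => exact mul_nonneg ha (exp_pos _).le
  | more n ih _ => exact mul_nonneg (by positivity) ih

lemma expArccosCoeff_add_two (a : ℝ) (n : ℕ) :
    (n + 1) * (n + 2) * expArccosCoeff a (n + 2) = (n ^ 2 + a ^ 2) * expArccosCoeff a n := by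
  rw [expArccosCoeff]
  field_simp

lemma convergesOnUnitBall_expArccosCoeff (a : ℝ) : ConvergesOnUnitBall (expArccosCoeff a) := by
  obtain ⟨M, hM⟩ := bddAbove_range_of_le_two_step (u := fun n => |expArccosCoeff a n|)
    (N := ⌈a ^ 2⌉₊) fun n hn => by
      have ha : a ^ 2 ≤ n := Nat.ceil_le.1 hn
      have hratio : (n ^ 2 + a ^ 2) / ((n + 1) * (n + 2)) ≤ (1 : ℝ) := by
        rw [div_le_one (by positivity)]
        nlinarith
      simp only [expArccosCoeff, abs_mul, abs_of_nonneg (by positivity :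
        (0 : ℝ) ≤ (n ^ 2 + a ^ 2) / ((n + 1) * (n + 2)))]
      exact mul_le_of_le_one_left (abs_nonneg _) hratio
  exact .of_abs_le fun n => hM ⟨n, rfl⟩

section ODE

variable {s : Set ℝ} {b t₀ : ℝ}

lemma eq_mul_exp_of_hasDerivAt {k : ℝ → ℝ} (hs : IsOpen s) (hs' : IsPreconnected s)
    (hk : ∀ t ∈ s, HasDerivAt k (b * k t) t) (ht₀ : t₀ ∈ s) :
    ∀ t ∈ s, k t = k t₀ * exp (b * (t - t₀)) := by
  have hm : ∀ t ∈ s, HasDerivAt (fun t => k t * exp (-(b * (t - t₀)))) 0 t := fun t ht =>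
    ((hk t ht).fun_mul (((hasDerivAt_id' t).sub_const t₀).const_mul b).fun_neg.exp).congr_deriv
      (by ring)
  intro t ht
  have hconst := hs.is_const_of_deriv_eq_zero hs'
    (fun t ht => (hm t ht).differentiableAt.differentiableWithinAt)
    (fun t ht => (hm t ht).deriv) ht ht₀
  simp only [sub_self, mul_zero, neg_zero, exp_zero, mul_one] at hconst
  rw [← hconst, mul_assoc, ← exp_add, neg_add_cancel, exp_zero, mul_one]

/-- `h'' = b² h` factors as `(D - b)(D + b) h = 0`. -/
lemma eq_mul_exp_of_hasDerivAt_of_hasDerivAt {h h' : ℝ → ℝ} (hs : IsOpen s)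
    (hs' : IsPreconnected s) (hh : ∀ t ∈ s, HasDerivAt h (h' t) t)
    (hh' : ∀ t ∈ s, HasDerivAt h' (b ^ 2 * h t) t) (ht₀ : t₀ ∈ s) (hinit : h' t₀ = -b * h t₀) :
    ∀ t ∈ s, h t = h t₀ * exp (-b * (t - t₀)) := by
  have hk : ∀ t ∈ s, HasDerivAt (fun t => h' t + b * h t) (b * (h' t + b * h t)) t :=
    fun t ht => ((hh' t ht).add ((hh t ht).const_mul b)).congr_deriv (by ring)
  have hk0 : ∀ t ∈ s, h' t + b * h t = 0 := fun t ht => by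
    rw [eq_mul_exp_of_hasDerivAt hs hs' hk ht₀ t ht, hinit]
    ring
  exact eq_mul_exp_of_hasDerivAt hs hs' (fun t ht => (hh t ht).congr_deriv
    (by linarith [hk0 t ht])) ht₀

end ODE

/-- Under `x = cos θ` the equation becomes `h'' = a ^ 2 h`. -/
lemma eq_mul_exp_neg_mul_arccos_of_ode {g g' g'' : ℝ → ℝ} {a : ℝ}
    (hg : ∀ x ∈ Ioo (-1 : ℝ) 1, HasDerivAt g (g' x) x)
    (hg' : ∀ x ∈ Ioo (-1 : ℝ) 1, HasDerivAt g' (g'' x) x)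
    (hode : ∀ x ∈ Ioo (-1 : ℝ) 1, (1 - x ^ 2) * g'' x - x * g' x = a ^ 2 * g x)
    (hinit : g' 0 = a * g 0) :
    ∀ x ∈ Ioo (-1 : ℝ) 1, g x = g 0 * exp (-a * (arccos x - π / 2)) := by
  have hcos : ∀ t ∈ Ioo 0 π, cos t ∈ Ioo (-1 : ℝ) 1 := fun t ht => by
    have : cos t ^ 2 < 1 := by nlinarith [sin_sq_add_cos_sq t, sin_pos_of_pos_of_lt_pi ht.1 ht.2]
    exact abs_lt.1 ((sq_lt_one_iff_abs_lt_one _).1 this)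
  have hh : ∀ t ∈ Ioo 0 π, HasDerivAt (fun t => g (cos t)) (g' (cos t) * -sin t) t :=
    fun t ht => (hg _ (hcos t ht)).comp t (hasDerivAt_cos t)
  have hh' : ∀ t ∈ Ioo 0 π,
      HasDerivAt (fun t => g' (cos t) * -sin t) (a ^ 2 * g (cos t)) t := fun t ht =>
    (((hg' _ (hcos t ht)).comp t (hasDerivAt_cos t)).mul (hasDerivAt_sin t).neg).congr_deriv
      (by simp only [Function.comp_apply, Pi.neg_apply]
          linear_combination hode _ (hcos t ht) + g'' (cos t) * sin_sq_add_cos_sq t)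
  have hπ : π / 2 ∈ Ioo 0 π := ⟨by positivity, by linarith [pi_pos]⟩
  intro x hx
  have := eq_mul_exp_of_hasDerivAt_of_hasDerivAt isOpen_Ioo isPreconnected_Ioo hh hh' hπ
    (by simp [hinit]) (arccos x) ⟨arccos_pos.2 hx.2, arccos_lt_pi.2 hx.1⟩
  simpa [cos_arccos hx.1.le hx.2.le] using this

lemma hasSum_expArccosCoeff (a : ℝ) {x : ℝ} (hx : x ∈ Ioo (-1 : ℝ) 1) :
    HasSum (fun n => expArccosCoeff a n * x ^ n) (exp (-(a * arccos x))) := by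
  have hc := convergesOnUnitBall_expArccosCoeff a
  have hode : ∀ y ∈ Ioo (-1 : ℝ) 1,
      (1 - y ^ 2) * ∑' n, derivCoeff (derivCoeff (expArccosCoeff a)) n * y ^ n
        - y * ∑' n, derivCoeff (expArccosCoeff a) n * y ^ n
        = a ^ 2 * ∑' n, expArccosCoeff a n * y ^ n := fun y hy => by
    refine (hc.hasSum_chebyshev (abs_lt.2 hy)).unique ?_
    refine ((hc.summable (abs_lt.2 hy)).hasSum.mul_left (a ^ 2)).congr_fun fun n => ?_
    rw [expArccosCoeff_add_two]
    ring
  have hinit : ∑' n, derivCoeff (expArccosCoeff a) n * 0 ^ n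
      = a * ∑' n, expArccosCoeff a n * 0 ^ n := by
    simp [tsum_mul_zero_pow, derivCoeff, expArccosCoeff]
  have hg := eq_mul_exp_neg_mul_arccos_of_ode (fun y hy => hc.hasDerivAt (abs_lt.2 hy))
    (fun y hy => hc.deriv.hasDerivAt (abs_lt.2 hy)) hode hinit x hx
  rw [tsum_mul_zero_pow, expArccosCoeff, ← exp_add] at hg
  convert (hc.summable (abs_lt.2 hx)).hasSum
  rw [hg]
  ring_nf

lemma summable_mul_pow_of_summable_abs {c : ℕ → ℝ} (hc : Summable fun n => |c n|) {x : ℝ}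
    (hx : |x| ≤ 1) : Summable fun n => c n * x ^ n :=
  hc.of_norm_bounded fun n => by
    rw [norm_mul, norm_pow, Real.norm_eq_abs, Real.norm_eq_abs]
    exact mul_le_of_le_one_right (abs_nonneg _) (pow_le_one₀ (abs_nonneg x) hx)

lemma summable_of_hasSum_mul_pow_le {c : ℕ → ℝ} {F : ℝ → ℝ} {B : ℝ} (hc : ∀ n, 0 ≤ c n)
    (hF : ∀ t ∈ Ico (0 : ℝ) 1, HasSum (fun n => c n * t ^ n) (F t))
    (hB : ∀ t ∈ Ico (0 : ℝ) 1, F t ≤ B) : Summable c := by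
  refine summable_of_sum_range_le (c := B) hc fun N => ?_
  have hpartial : ∀ t ∈ Ico (0 : ℝ) 1, ∑ n ∈ Finset.range N, c n * t ^ n ≤ B := fun t ht =>
    (sum_le_hasSum _ (fun n _ => mul_nonneg (hc n) (pow_nonneg ht.1 n)) (hF t ht)).trans (hB t ht)
  have hlim : Tendsto (fun t : ℝ => ∑ n ∈ Finset.range N, c n * t ^ n) (𝓝[<] 1)
      (𝓝 (∑ n ∈ Finset.range N, c n)) := by
    have hcont : Continuous fun t : ℝ => ∑ n ∈ Finset.range N, c n * t ^ n := by fun_prop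
    simpa using (hcont.tendsto 1).mono_left nhdsWithin_le_nhds
  exact le_of_tendsto hlim (eventually_of_mem (Ico_mem_nhdsLT one_pos) hpartial)

lemma eq_tsum_mul_pow_of_continuousOn {c : ℕ → ℝ} {F : ℝ → ℝ} (hc : Summable fun n => |c n|)
    (hF : ContinuousOn F (Icc (-1) 1)) (hFc : ∀ y ∈ Ioo (-1 : ℝ) 1, F y = ∑' n, c n * y ^ n)
    {x : ℝ} (hx : x ∈ Icc (-1 : ℝ) 1) : F x = ∑' n, c n * x ^ n := by
  have hx' : |x| ≤ 1 := abs_le.2 hx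
  have habel := Real.tendsto_tsum_powerSeries_nhdsWithin_lt
    (summable_mul_pow_of_summable_abs hc hx').hasSum.tendsto_sum_nat
  have hscale : ∀ t ∈ Ioo (0 : ℝ) 1, t * x ∈ Ioo (-1 : ℝ) 1 := fun t ht => by
    have : |t * x| < 1 := by
      rw [abs_mul, abs_of_pos ht.1]
      exact (mul_le_of_le_one_right ht.1.le hx').trans_lt ht.2
    exact abs_lt.1 this
  have hFlim : Tendsto (fun t => F (t * x)) (𝓝[<] 1) (𝓝 (F x)) := by
    refine (hF x hx).tendsto.comp (tendsto_nhdsWithin_iff.2 ⟨?_, ?_⟩)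
    · exact ((continuous_id.mul continuous_const).tendsto' 1 x (one_mul x)).mono_left
        nhdsWithin_le_nhds
    · filter_upwards [Ioo_mem_nhdsLT one_pos] with t ht
      exact Ioo_subset_Icc_self (hscale t ht)
  refine tendsto_nhds_unique (hFlim.congr' ?_) habel
  filter_upwards [Ioo_mem_nhdsLT one_pos] with t ht
  rw [hFc _ (hscale t ht)]
  exact tsum_congr fun n => by ring

/-- For every `a > 0`, `x ↦ exp(−a·arccos x)` on `[−1,1]` has a power series
expansion `∑ cₙ xⁿ` convergent on `[−1,1]` with all `cₙ ≥ 0`. -/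
theorem exp_neg_mul_arccos_nonneg_coeffs (a : ℝ) (ha : 0 < a) :
    ∃ c : ℕ → ℝ, (∀ n, 0 ≤ c n) ∧
      ∀ x ∈ Set.Icc (-1 : ℝ) 1,
        Summable (fun n : ℕ => c n * x ^ n) ∧
        Real.exp (-(a * Real.arccos x)) = ∑' n : ℕ, c n * x ^ n := by
  have hnonneg := expArccosCoeff_nonneg ha.le
  have hsum : Summable fun n => |expArccosCoeff a n| := by
    simp_rw [abs_of_nonneg (hnonneg _)]
    refine summable_of_hasSum_mul_pow_le (B := 1) hnonneg
      (fun t ht => hasSum_expArccosCoeff a ⟨by linarith [ht.1], ht.2⟩) fun t _ => ?_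
    exact exp_le_one_iff.2 (neg_nonpos.2 (mul_nonneg ha.le (arccos_nonneg t)))
  refine ⟨expArccosCoeff a, hnonneg, fun x hx =>
    ⟨summable_mul_pow_of_summable_abs hsum (abs_le.2 hx), ?_⟩⟩
  have hcont : ContinuousOn (fun x => exp (-(a * arccos x))) (Icc (-1) 1) := by fun_prop
  refine eq_tsum_mul_pow_of_continuousOn hsum hcont (fun y hy => ?_) hx
  exact (hasSum_expArccosCoeff a hy).tsum_eq.symm
end

section
/- For every a > 0 and x ∈ [−1,1], exp(−a·Arccos(x)) = e^{−aπ/2} · ∑_{n=0}^∞ (r_n(a)/n!)·x^n, where the r_n satisfy the recursion r_0 = 1, r_{n+1}(a) = a·∑_{k=0}^{⌊n/2⌋} binom(n,2k)·r_{n−2k}(a)·((2k−1)!!)², and each r_n(a) > 0 for a > 0. -/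
/-!
With `cₙ = rₙ(a) / n!` the recursion reads `(n + 1) c_{n+1} = a ∑_{j ≤ n} c_{n-j} βⱼ`, where
`βⱼ` are the Taylor coefficients of `(1 - x²)^{-1/2}` (`β_{2k} = ((2k-1)!!)² / (2k)!`). Hence
`F(x) = ∑ cₙ xⁿ` solves `F' = a F / √(1 - x²)`, `F(0) = 1` on `(-1, 1)`, i.e. `F = exp (a arcsin)`.
Since `βⱼ ≤ 1`, the partial sums of `c` grow at most polynomially, which gives convergence and
termwise differentiability on `(-1, 1)`; the coefficients being positive, the bound
`F ≤ exp (a π / 2)` makes `∑ cₙ` converge, so the identity extends to `[-1, 1]`. Finally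
`arccos = π / 2 - arcsin`.
-/

open Finset Nat Real

lemma multichoose_one_half_succ (k : ℕ) :
    Ring.multichoose (1 / 2 : ℝ) (k + 1) =
      Ring.multichoose (1 / 2 : ℝ) k * (2 * k + 1) / (2 * k + 2) := by
  have h := fun n => (Ring.factorial_nsmul_multichoose_eq_ascPochhammer (1 / 2 : ℝ) n).trans
    (Polynomial.ascPochhammer_smeval_eq_eval _ _)
  have hk := h (k + 1)
  rw [ascPochhammer_succ_eval, ← h k, nsmul_eq_mul, nsmul_eq_mul, factorial_succ] at hk
  have hk' : (k + 1) * Ring.multichoose (1 / 2 : ℝ) (k + 1) =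
      Ring.multichoose (1 / 2 : ℝ) k * (1 / 2 + k) := by
    apply mul_left_cancel₀ (by positivity : (k ! : ℝ) ≠ 0)
    push_cast at hk
    linear_combination hk
  field_simp
  linear_combination 2 * hk'

lemma multichoose_one_half_mem_Icc (k : ℕ) : Ring.multichoose (1 / 2 : ℝ) k ∈ Set.Icc 0 1 := by
  induction k with
  | zero => simp
  | succ k ih =>
    rw [multichoose_one_half_succ, mul_div_assoc]
    have hq : (2 * k + 1 : ℝ) / (2 * k + 2) ∈ Set.Icc 0 1 :=
      ⟨by positivity, (div_le_one (by positivity)).2 (by linarith)⟩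
    exact ⟨mul_nonneg ih.1 hq.1, mul_le_one₀ ih.2 hq.1 hq.2⟩

lemma multichoose_one_half_eq (k : ℕ) :
    Ring.multichoose (1 / 2 : ℝ) k = ((∏ i ∈ range k, (2 * i + 1) : ℕ) : ℝ) ^ 2 / (2 * k)! := by
  induction k with
  | zero => simp
  | succ k ih =>
    rw [multichoose_one_half_succ, ih, prod_range_succ, Nat.mul_add_one 2 k, factorial_succ,
      factorial_succ]
    push_cast
    have : ((2 * k) ! : ℝ) ≠ 0 := by positivity
    field_simp
    ring

noncomputable def invSqrtOneSubSqCoeff (j : ℕ) : ℝ :=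
  if Even j then Ring.multichoose (1 / 2 : ℝ) (j / 2) else 0

lemma invSqrtOneSubSqCoeff_zero : invSqrtOneSubSqCoeff 0 = 1 := by
  simp [invSqrtOneSubSqCoeff]

lemma invSqrtOneSubSqCoeff_mem_Icc (j : ℕ) : invSqrtOneSubSqCoeff j ∈ Set.Icc 0 1 := by
  unfold invSqrtOneSubSqCoeff
  split_ifs
  · exact multichoose_one_half_mem_Icc _
  · simp

lemma hasSum_invSqrtOneSubSqCoeff_mul_pow {x : ℝ} (hx : |x| < 1) :
    HasSum (fun j => invSqrtOneSubSqCoeff j * x ^ j) (1 / √(1 - x ^ 2)) := by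
  have hx2 : x ^ 2 ∈ Metric.eball (0 : ℝ) 1 := by
    have : |x ^ 2| < 1 := by rw [abs_pow]; exact pow_lt_one₀ (abs_nonneg x) hx two_ne_zero
    simpa [Metric.mem_eball, edist_dist] using this
  have h := (one_div_one_sub_rpow_hasFPowerSeriesOnBall_zero (1 / 2)).hasSum hx2
  simp only [FormalMultilinearSeries.ofScalars_apply_eq, ← Ring.multichoose_eq, smul_eq_mul,
    zero_add, ← sqrt_eq_rpow] at h
  refine ((mul_right_injective₀ two_ne_zero).hasSum_iff fun j hj => ?_).1
    (h.congr_fun fun k => ?_)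
  · have : ¬ Even j := fun ⟨k, hk⟩ => hj ⟨k, by simp only; omega⟩
    simp [invSqrtOneSubSqCoeff, this]
  · simp [invSqrtOneSubSqCoeff, pow_mul]

lemma sum_range_mul_invSqrtOneSubSqCoeff (f : ℕ → ℝ) (n : ℕ) :
    ∑ k ∈ range (n + 1), f k * invSqrtOneSubSqCoeff (n - k) =
      ∑ k ∈ range (n / 2 + 1), f (n - 2 * k) * Ring.multichoose (1 / 2 : ℝ) k := by
  have hreflect : ∑ k ∈ range (n + 1), f k * invSqrtOneSubSqCoeff (n - k) =
      ∑ j ∈ range (n + 1), f (n - j) * invSqrtOneSubSqCoeff j := by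
    rw [← sum_range_reflect]
    refine sum_congr rfl fun j hj => ?_
    rw [mem_range] at hj
    rw [show n + 1 - 1 - j = n - j by omega, Nat.sub_sub_self (by omega)]
  have heven : ∑ k ∈ range (n / 2 + 1), f (n - 2 * k) * Ring.multichoose (1 / 2 : ℝ) k =
      ∑ j ∈ (range (n / 2 + 1)).image (2 * ·), f (n - j) * invSqrtOneSubSqCoeff j := by
    rw [sum_image fun _ _ _ _ h => by simpa using h]
    simp [invSqrtOneSubSqCoeff]
  rw [hreflect, heven]
  refine (sum_subset (fun j => by simp; omega) fun j hjn hj => ?_).symm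
  have : ¬ Even j := fun ⟨k, hk⟩ => hj (mem_image.2 ⟨k, by simp at hjn ⊢; omega, by omega⟩)
  simp [invSqrtOneSubSqCoeff, this]

lemma recurrence_div_factorial {s : ℕ → ℝ} {a : ℝ}
    (hrec : ∀ n, s (n + 1) = a * ∑ k ∈ range (n / 2 + 1),
      (n.choose (2 * k) : ℝ) * s (n - 2 * k) * ((∏ i ∈ range k, (2 * i + 1) : ℕ) : ℝ) ^ 2)
    (n : ℕ) :
    (n + 1) * (s (n + 1) / (n + 1)!) =
      a * ∑ k ∈ range (n + 1), s k / k ! * invSqrtOneSubSqCoeff (n - k) := by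
  have hlhs : (n + 1) * (s (n + 1) / (n + 1)!) = s (n + 1) / n ! := by
    rw [factorial_succ, Nat.cast_mul, Nat.cast_succ]
    field_simp
  rw [hlhs, sum_range_mul_invSqrtOneSubSqCoeff (fun k => s k / k !), hrec, mul_div_assoc, sum_div]
  congr 1
  refine sum_congr rfl fun k hk => ?_
  have h2k : 2 * k ≤ n := by simp at hk; omega
  rw [multichoose_one_half_eq, Nat.cast_choose ℝ h2k]
  field_simp

lemma summable_add_pow_mul_geometric (m K : ℕ) {ρ : ℝ} (h0 : 0 ≤ ρ) (h1 : ρ < 1) :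
    Summable fun n : ℕ => ((n : ℝ) + m) ^ K * ρ ^ n := by
  have hρ : ‖ρ‖ < 1 := by rwa [norm_of_nonneg h0]
  simp_rw [add_pow, sum_mul]
  exact summable_sum fun j _ => ((summable_pow_mul_geometric_of_norm_lt_one j hρ).mul_right
    ((m : ℝ) ^ (K - j) * K.choose j)).congr fun n => by ring

lemma tsum_mul_pow_mul_tsum_mul_pow {c d : ℕ → ℝ} {x : ℝ} (hc : Summable fun n => ‖c n * x ^ n‖)
    (hd : Summable fun n => ‖d n * x ^ n‖) :
    (∑' n, c n * x ^ n) * ∑' n, d n * x ^ n =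
      ∑' n, (∑ k ∈ range (n + 1), c k * d (n - k)) * x ^ n := by
  rw [tsum_mul_tsum_eq_tsum_sum_range_of_summable_norm hc hd]
  refine tsum_congr fun n => ?_
  rw [sum_mul]
  refine sum_congr rfl fun k hk => ?_
  rw [← pow_mul_pow_sub x (Nat.le_of_lt_succ (mem_range.1 hk))]
  ring

section PolynomiallyBounded

variable {c : ℕ → ℝ} {M : ℝ} {K : ℕ}

lemma summable_norm_mul_pow_of_abs_le (hc : ∀ n, |c n| ≤ M * ((n : ℝ) + 1) ^ K) {x : ℝ}
    (hx : |x| < 1) : Summable fun n => ‖c n * x ^ n‖ := by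
  refine .of_nonneg_of_le (fun n => norm_nonneg _) (fun n => ?_)
    ((summable_add_pow_mul_geometric 1 K (abs_nonneg x) hx).mul_left M)
  rw [norm_eq_abs, abs_mul, abs_pow, Nat.cast_one, ← mul_assoc]
  exact mul_le_mul_of_nonneg_right (hc n) (by positivity)

lemma hasDerivAt_tsum_mul_pow (hc : ∀ n, |c n| ≤ M * ((n : ℝ) + 1) ^ K) {x : ℝ}
    (hx : |x| < 1) :
    HasDerivAt (fun y => ∑' n, c n * y ^ n) (∑' n, (n + 1) * c (n + 1) * x ^ n) x := by
  obtain ⟨ρ, hxρ, hρ1⟩ := exists_between hx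
  have hρ0 : 0 ≤ ρ := (abs_nonneg x).trans hxρ.le
  have hM : 0 ≤ M := (abs_nonneg _).trans (by simpa using hc 0)
  have htail : HasDerivAt (fun y => ∑' n, c (n + 1) * y ^ (n + 1))
      (∑' n, (n + 1) * c (n + 1) * x ^ n) x := by
    refine hasDerivAt_tsum_of_isPreconnected (g := fun n y => c (n + 1) * y ^ (n + 1))
      (g' := fun n y => (n + 1) * c (n + 1) * y ^ n) (y₀ := 0)
      ((summable_add_pow_mul_geometric 2 (K + 1) hρ0 hρ1).mul_left M) Metric.isOpen_ball
      (convex_ball 0 ρ).isPreconnected (fun n y _ => ?_) (fun n y hy => ?_)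
      (Metric.mem_ball_self ((abs_nonneg x).trans_lt hxρ)) (by simp) (by simpa using hxρ)
    · simpa [mul_comm, mul_left_comm] using (hasDerivAt_pow (n + 1) y).const_mul (c (n + 1))
    · have hy : |y| ≤ ρ := by simpa using (Metric.mem_ball.1 hy).le
      have hcn : |c (n + 1)| ≤ M * ((n : ℝ) + 2) ^ K := by
        simpa [add_assoc, one_add_one_eq_two] using hc (n + 1)
      rw [norm_eq_abs, abs_mul, abs_mul, abs_pow, abs_of_nonneg (by positivity : (0 : ℝ) ≤ n + 1)]
      calc (n + 1) * |c (n + 1)| * |y| ^ n ≤ (n + 2) * (M * ((n : ℝ) + 2) ^ K) * ρ ^ n := by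
            gcongr
            linarith
        _ = M * (((n : ℝ) + (2 : ℕ)) ^ (K + 1) * ρ ^ n) := by push_cast; ring
  refine (htail.const_add (c 0)).congr_of_eventuallyEq ?_
  filter_upwards [Metric.isOpen_ball.mem_nhds (by simpa using hx : x ∈ Metric.ball (0 : ℝ) 1)]
    with y hy
  rw [(summable_norm_mul_pow_of_abs_le hc (by simpa using hy)).of_norm.tsum_eq_zero_add]
  simp

end PolynomiallyBounded

lemma summable_norm_invSqrtOneSubSqCoeff_mul_pow {x : ℝ} (hx : |x| < 1) :
    Summable fun j => ‖invSqrtOneSubSqCoeff j * x ^ j‖ := by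
  refine summable_norm_mul_pow_of_abs_le (M := 1) (K := 0) (fun j => ?_) hx
  have hj := invSqrtOneSubSqCoeff_mem_Icc j
  simpa [abs_of_nonneg hj.1] using hj.2

lemma hasSum_mul_pow_of_nonneg_of_continuousOn {c : ℕ → ℝ} {f : ℝ → ℝ} (hc : ∀ n, 0 ≤ c n)
    (hf : ContinuousOn f (Set.Icc (-1) 1))
    (hsum : ∀ x ∈ Set.Ioo (-1 : ℝ) 1, HasSum (fun n => c n * x ^ n) (f x)) :
    ∀ x ∈ Set.Icc (-1 : ℝ) 1, HasSum (fun n => c n * x ^ n) (f x) := by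
  have hsummable : Summable c := by
    refine summable_of_sum_range_le hc (c := f 1) fun N => ?_
    have hpoly : Filter.Tendsto (fun t : ℝ => ∑ n ∈ range N, c n * t ^ n) (nhdsWithin 1 (Set.Iio 1))
        (nhds (∑ n ∈ range N, c n)) := by
      have hcont : Continuous fun t : ℝ => ∑ n ∈ range N, c n * t ^ n := by fun_prop
      simpa using (hcont.tendsto 1).mono_left nhdsWithin_le_nhds
    refine le_of_tendsto_of_tendsto hpoly ((hf 1 (by norm_num)).mono_of_mem_nhdsWithin
      (Icc_mem_nhdsLT_of_mem (by norm_num))) ?_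
    filter_upwards [Ioo_mem_nhdsLT (by norm_num : (0 : ℝ) < 1)] with t ht
    exact sum_le_hasSum _ (fun n _ => mul_nonneg (hc n) (pow_nonneg ht.1.le n))
      (hsum t ⟨by linarith [ht.1], ht.2⟩)
  have hbound : ∀ n, ∀ x ∈ Set.Icc (-1 : ℝ) 1, ‖c n * x ^ n‖ ≤ c n := fun n x hx => by
    rw [norm_mul, norm_pow, norm_of_nonneg (hc n)]
    exact mul_le_of_le_one_right (hc n) (pow_le_one₀ (norm_nonneg x) (abs_le.2 hx))
  have hcont : ContinuousOn (fun x => ∑' n, c n * x ^ n) (Set.Icc (-1) 1) :=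
    continuousOn_tsum (fun n => by fun_prop) hsummable hbound
  have heq : Set.EqOn (fun x => ∑' n, c n * x ^ n) f (Set.Icc (-1) 1) :=
    Set.EqOn.of_subset_closure (fun x hx => (hsum x hx).tsum_eq) hcont hf Set.Ioo_subset_Icc_self
      (by rw [closure_Ioo (by norm_num)])
  intro x hx
  exact heq hx ▸ (hsummable.of_norm_bounded fun n => hbound n x hx).hasSum

section Recurrence

variable {a : ℝ} {c : ℕ → ℝ}

lemma pos_of_recurrence (ha : 0 < a) (hc0 : 0 < c 0)
    (hrec : ∀ n, (n + 1) * c (n + 1) = a * ∑ k ∈ range (n + 1), c k * invSqrtOneSubSqCoeff (n - k))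
    (n : ℕ) : 0 < c n := by
  induction n using Nat.strong_induction_on with
  | _ n ih =>
    cases n with
    | zero => exact hc0
    | succ n =>
      have hsum : 0 < ∑ k ∈ range (n + 1), c k * invSqrtOneSubSqCoeff (n - k) := by
        rw [sum_range_succ, Nat.sub_self, invSqrtOneSubSqCoeff_zero, mul_one]
        refine add_pos_of_nonneg_of_pos (sum_nonneg fun k hk => ?_) (ih n n.lt_succ_self)
        exact mul_nonneg (ih k (by simp at hk; omega)).le (invSqrtOneSubSqCoeff_mem_Icc _).1
      exact pos_of_mul_pos_right ((hrec n).symm ▸ mul_pos ha hsum) (by positivity)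

lemma sum_range_le_mul_pow_ceil (hc : ∀ n, 0 ≤ c n)
    (h : ∀ n, (n + 1) * c (n + 1) ≤ a * ∑ m ∈ range (n + 1), c m) (n : ℕ) :
    ∑ m ∈ range (n + 1), c m ≤ c 0 * ((n : ℝ) + 1) ^ ⌈a⌉₊ := by
  induction n with
  | zero => simp
  | succ n ih =>
    set S := ∑ m ∈ range (n + 1), c m
    have hn : (0 : ℝ) < n + 1 := by positivity
    have hstep : 1 + a / (n + 1) ≤ (1 + 1 / ((n : ℝ) + 1)) ^ ⌈a⌉₊ := by
      calc 1 + a / (n + 1) ≤ 1 + ⌈a⌉₊ * (1 / ((n : ℝ) + 1)) := by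
            rw [mul_one_div]; gcongr; exact Nat.le_ceil a
        _ ≤ _ := one_add_mul_le_pow (by linarith [show 0 ≤ 1 / ((n : ℝ) + 1) by positivity]) _
    calc ∑ m ∈ range (n + 1 + 1), c m = S + c (n + 1) := sum_range_succ _ _
      _ ≤ (1 + a / (n + 1)) * S := by
          have := h n
          rw [add_mul, one_mul, div_mul_eq_mul_div, add_le_add_iff_left, le_div_iff₀ hn]
          linarith
      _ ≤ (1 + 1 / ((n : ℝ) + 1)) ^ ⌈a⌉₊ * (c 0 * ((n : ℝ) + 1) ^ ⌈a⌉₊) :=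
          mul_le_mul hstep ih (sum_nonneg fun m _ => hc m) (by positivity)
      _ = c 0 * (((n + 1 : ℕ) : ℝ) + 1) ^ ⌈a⌉₊ := by
          rw [mul_left_comm, ← mul_pow]
          congr 2
          push_cast
          field_simp

lemma abs_le_of_recurrence (ha : 0 ≤ a) (hc : ∀ n, 0 ≤ c n)
    (hrec : ∀ n, (n + 1) * c (n + 1) = a * ∑ k ∈ range (n + 1), c k * invSqrtOneSubSqCoeff (n - k))
    (n : ℕ) : |c n| ≤ c 0 * ((n : ℝ) + 1) ^ ⌈a⌉₊ := by
  refine (abs_of_nonneg (hc n)).trans_le ((single_le_sum (fun m _ => hc m)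
    (self_mem_range_succ n)).trans (sum_range_le_mul_pow_ceil hc (fun m => ?_) n))
  rw [hrec]
  gcongr with k
  exact mul_le_of_le_one_right (hc k) (invSqrtOneSubSqCoeff_mem_Icc _).2

lemma hasSum_mul_pow_exp_mul_arcsin {M : ℝ} {K : ℕ} (hc : ∀ n, |c n| ≤ M * ((n : ℝ) + 1) ^ K)
    (hc0 : c 0 = 1)
    (hrec : ∀ n, (n + 1) * c (n + 1) = a * ∑ k ∈ range (n + 1), c k * invSqrtOneSubSqCoeff (n - k))
    {x : ℝ} (hx : x ∈ Set.Ioo (-1) 1) : HasSum (fun n => c n * x ^ n) (exp (a * arcsin x)) := by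
  set F := fun y => ∑' n, c n * y ^ n
  have hF : ∀ y ∈ Set.Ioo (-1 : ℝ) 1, HasDerivAt F (a * F y * (1 / √(1 - y ^ 2))) y := by
    intro y hy
    have hy : |y| < 1 := abs_lt.2 hy
    convert hasDerivAt_tsum_mul_pow hc hy using 1
    rw [← (hasSum_invSqrtOneSubSqCoeff_mul_pow hy).tsum_eq, mul_assoc,
      tsum_mul_pow_mul_tsum_mul_pow (summable_norm_mul_pow_of_abs_le hc hy)
        (summable_norm_invSqrtOneSubSqCoeff_mul_pow hy), ← tsum_mul_left]
    simp_rw [hrec, mul_assoc]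
  have hG : ∀ y ∈ Set.Ioo (-1 : ℝ) 1, HasDerivAt (fun y => F y * exp (-(a * arcsin y))) 0 y := by
    intro y hy
    have harcsin := hasDerivAt_arcsin hy.1.ne' hy.2.ne
    have hexp : HasDerivAt (fun y => exp (-(a * arcsin y)))
        (exp (-(a * arcsin y)) * -(a * (1 / √(1 - y ^ 2)))) y :=
      (harcsin.const_mul a).neg.exp
    exact ((hF y hy).mul hexp).congr_deriv (by ring)
  have hconst := isOpen_Ioo.is_const_of_deriv_eq_zero isPreconnected_Ioo
    (fun y hy => (hG y hy).differentiableAt.differentiableWithinAt)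
    (fun y hy => (hG y hy).deriv) hx (show (0 : ℝ) ∈ Set.Ioo (-1) 1 by norm_num)
  have hF0 : F 0 = 1 := by
    change ∑' n, c n * 0 ^ n = 1
    rw [tsum_eq_single 0 fun n hn => by simp [hn]]
    simp [hc0]
  have hFx : F x = exp (a * arcsin x) := by
    simp only [arcsin_zero, mul_zero, neg_zero, exp_zero, mul_one, hF0, exp_neg] at hconst
    field_simp at hconst
    exact hconst
  exact hFx ▸ (summable_norm_mul_pow_of_abs_le hc (abs_lt.2 hx)).of_norm.hasSum

end Recurrence

/-- For `a > 0` and `x ∈ [−1,1]`,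
`exp(−a·arccos x) = e^{−aπ/2} ∑ (rₙ(a)/n!) xⁿ`, where the `rₙ` satisfy the
recursion `r₀ = 1`, `r_{n+1}(a) = a·∑_{k≤⌊n/2⌋} binom(n,2k)·r_{n−2k}(a)·((2k−1)!!)²`,
and each `rₙ(a) > 0` for `a > 0`. -/
theorem exp_neg_mul_arccos_expansion (r : ℕ → ℝ → ℝ)
    (h0 : ∀ a : ℝ, r 0 a = 1)
    (hrec : ∀ (n : ℕ) (a : ℝ), r (n + 1) a = a *
      ∑ k ∈ Finset.range (n / 2 + 1),
        (Nat.choose n (2 * k) : ℝ) * r (n - 2 * k) a *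
          (((∏ i ∈ Finset.range k, (2 * i + 1) : ℕ)) : ℝ) ^ 2)
    (a : ℝ) (ha : 0 < a) :
    (∀ n : ℕ, 0 < r n a) ∧
    ∀ x ∈ Set.Icc (-1 : ℝ) 1,
      Real.exp (-(a * Real.arccos x)) =
        Real.exp (-(a * Real.pi / 2)) *
          ∑' n : ℕ, r n a / (Nat.factorial n) * x ^ n := by
  set c : ℕ → ℝ := fun n => r n a / (n !)
  have hrec' (n : ℕ) :
      (n + 1) * c (n + 1) = a * ∑ k ∈ range (n + 1), c k * invSqrtOneSubSqCoeff (n - k) :=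
    recurrence_div_factorial (s := (r · a)) (fun n => hrec n a) n
  have hc0 : c 0 = 1 := by simp [c, h0]
  have hpos (n : ℕ) : 0 < c n := pos_of_recurrence ha (hc0 ▸ one_pos) hrec' n
  refine ⟨fun n => (div_pos_iff_of_pos_right (by positivity)).1 (hpos n), ?_⟩
  have hIcc := hasSum_mul_pow_of_nonneg_of_continuousOn (fun n => (hpos n).le)
    (by fun_prop : ContinuousOn (fun x => exp (a * arcsin x)) (Set.Icc (-1) 1))
    fun x hx => hasSum_mul_pow_exp_mul_arcsin
      (abs_le_of_recurrence ha.le (fun n => (hpos n).le) hrec') hc0 hrec' hx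
  intro x hx
  rw [(hIcc x hx).tsum_eq, ← exp_add, arccos_eq_pi_div_two_sub_arcsin]
  ring_nf
end

section
/- Let h : ℝ → ℝ be continuous with compact support, max h = 1, h > 0 on [0,1], and 𝓕h ∉ L¹(ℝ). Let (a_n)_{n∈ℤ} be positive reals with a_0 = 1/2 and ∑_{n≠0} a_n = 1/4. Then f(x) = ∑_{n∈ℤ} a_n h(x−n) is continuous, satisfies 0 < f(x) ≤ 3/4 for all x, is integrable with ∫f = (3/4)∫h, and |𝓕f(t)| ≥ (1/4)|𝓕h(t)| for all t; in particular 𝓕f ∉ L¹(ℝ). -/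
/-!
Translation commutes with integration, and the Fourier transform turns a translate `h(· - n)`
into `e^{-itn} 𝓕h`. Hence `∫ f = (∑ aₙ) ∫ h` and `𝓕f(t) = m(t) 𝓕h(t)` with the multiplier
`m(t) = ∑ aₙ e^{-itn}`, which is bounded below by `a₀ - ∑_{n ≠ 0} aₙ = 1/4` since the constant
term dominates. As `𝓕h` is continuous, `|𝓕h| ≤ 4 |𝓕f|` transfers non-integrability from `𝓕h`
to `𝓕f`. Positivity of `f` at `x` comes from the single term `n = ⌊x⌋`.
-/

open MeasureTheory Complex

theorem hasSum_of_hasSum_subtype_ne {ι α : Type*} [AddCommMonoid α] [TopologicalSpace α]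
    [ContinuousAdd α] {f : ι → α} {i : ι} {s : α}
    (hf : HasSum (fun n : {n // n ≠ i} => f n) s) : HasSum f (f i + s) :=
  (hasSum_singleton i f).add_compl (s := {i}) hf

theorem norm_sub_le_norm_tsum_of_hasSum_norm_ne {ι E : Type*} [NormedAddCommGroup E]
    [CompleteSpace E] {c : ι → E} {i : ι} {r : ℝ}
    (hc : HasSum (fun n : {n // n ≠ i} => ‖c n‖) r) : ‖c i‖ - r ≤ ‖∑' n, c n‖ := by
  have hs : Summable (fun n : {n // n ≠ i} => c n) := hc.summable.of_norm
  have hrest : ‖∑' n : {n // n ≠ i}, c n‖ ≤ r := hc.tsum_eq ▸ norm_tsum_le_tsum_norm hc.summable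
  rw [(hasSum_of_hasSum_subtype_ne hs.hasSum).tsum_eq]
  linarith [norm_sub_le_norm_add (c i) (∑' n : {n // n ≠ i}, c n)]

theorem norm_exp_neg_ofReal_mul_ofReal_mul_I (t x : ℝ) : ‖exp (-(t * x) * I)‖ = 1 := by
  exact_mod_cast norm_exp_ofReal_mul_I (-(t * x))

theorem norm_ofReal_mul_exp_neg_ofReal_mul_intCast_mul_I (r t : ℝ) (n : ℤ) :
    ‖(r : ℂ) * exp (-((t : ℂ) * (n : ℂ)) * I)‖ = |r| := by
  rw [norm_mul, ← ofReal_intCast, norm_exp_neg_ofReal_mul_ofReal_mul_I, mul_one, norm_real,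
    Real.norm_eq_abs]

theorem sub_le_norm_tsum_ofReal_mul_exp {a : ℤ → ℝ} {r : ℝ} (ha : ∀ n, 0 ≤ a n)
    (hrest : HasSum (fun n : {n : ℤ // n ≠ 0} => a n) r) (t : ℝ) :
    a 0 - r ≤ ‖∑' n : ℤ, (a n : ℂ) * exp (-((t : ℂ) * (n : ℂ)) * I)‖ := by
  have hnorm (n : ℤ) : ‖(a n : ℂ) * exp (-((t : ℂ) * (n : ℂ)) * I)‖ = a n := by
    rw [norm_ofReal_mul_exp_neg_ofReal_mul_intCast_mul_I, abs_of_nonneg (ha n)]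
  simpa only [hnorm] using norm_sub_le_norm_tsum_of_hasSum_norm_ne (i := 0)
    (c := fun n : ℤ => (a n : ℂ) * exp (-((t : ℂ) * (n : ℂ)) * I)) (by simpa only [hnorm])

noncomputable def periodization {𝕜 E : Type*} [NormedField 𝕜] [NormedAddCommGroup E]
    [NormedSpace 𝕜 E] (a : ℤ → 𝕜) (g : ℝ → E) (x : ℝ) : E :=
  ∑' n : ℤ, a n • g (x - n)

/-- The Fourier transform normalized as `𝓕g(t) = ∫ e^{-itx} g(x) dx`, without the `2π` of
Mathlib's `𝓕` on `ℝ → ℂ`. -/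
noncomputable def angularFourierIntegral (g : ℝ → ℂ) (t : ℝ) : ℂ :=
  ∫ x : ℝ, exp (-((t : ℂ) * (x : ℂ)) * I) * g x

section Periodization

variable {𝕜 E : Type*} [RCLike 𝕜] [NormedAddCommGroup E] [NormedSpace 𝕜 E]
  {a : ℤ → 𝕜} {g : ℝ → E}

theorem summable_smul_comp_sub [CompleteSpace E] {C : ℝ} (ha : Summable (‖a ·‖))
    (hC : ∀ y, ‖g y‖ ≤ C) (x : ℝ) :
    Summable fun n : ℤ => a n • g (x - n) :=
  (ha.mul_right C).of_norm_bounded fun _ => (norm_smul_le _ _).trans <|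
    mul_le_mul_of_nonneg_left (hC _) (norm_nonneg _)

theorem continuous_periodization [CompleteSpace E] {C : ℝ} (ha : Summable (‖a ·‖))
    (hg : Continuous g) (hC : ∀ y, ‖g y‖ ≤ C) : Continuous (periodization a g) :=
  continuous_tsum (fun _ => continuous_const.smul (hg.comp (continuous_sub_right _)))
    (ha.mul_right C) fun _ _ => (norm_smul_le _ _).trans <|
      mul_le_mul_of_nonneg_left (hC _) (norm_nonneg _)

theorem integrable_periodization (ha : Summable (‖a ·‖)) (hg : Integrable g)
    (hmeas : AEStronglyMeasurable (periodization a g)) : Integrable (periodization a g) := by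
  refine ⟨hmeas, ?_⟩
  calc ∫⁻ x, ‖periodization a g x‖ₑ
      ≤ ∫⁻ x, ∑' n : ℤ, ‖a n‖ₑ * ‖g (x - n)‖ₑ :=
        lintegral_mono fun x => enorm_tsum_le_tsum_enorm.trans_eq <| by simp only [enorm_smul]
    _ = ∑' n : ℤ, ∫⁻ x, ‖a n‖ₑ * ‖g (x - n)‖ₑ :=
        lintegral_tsum fun n => (hg.comp_sub_right (n : ℝ)).aestronglyMeasurable.enorm.const_mul _
    _ = (∑' n : ℤ, ‖a n‖ₑ) * ∫⁻ x, ‖g x‖ₑ := by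
        simp_rw [lintegral_const_mul' _ _ enorm_ne_top,
          lintegral_sub_right_eq_self (fun x => ‖g x‖ₑ)]
        exact ENNReal.tsum_mul_right
    _ < ⊤ := ENNReal.mul_lt_top (tsum_enorm_ne_top_iff_summable_norm.2 ha).lt_top hg.2

theorem integral_periodization [NormedSpace ℝ E] [SMulCommClass ℝ 𝕜 E] (ha : Summable (‖a ·‖))
    (hg : Integrable g) : ∫ x, periodization a g x = (∑' n, a n) • ∫ x, g x := by
  have hint (n : ℤ) : Integrable fun x : ℝ => a n • g (x - n) :=
    (hg.comp_sub_right (n : ℝ)).smul (a n)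
  have hnorm (n : ℤ) : ∫ x : ℝ, ‖a n • g (x - n)‖ = ‖a n‖ * ∫ x, ‖g x‖ := by
    simp_rw [norm_smul]
    rw [integral_const_mul, integral_sub_right_eq_self (fun x => ‖g x‖) (n : ℝ)]
  have hterm (n : ℤ) : ∫ x : ℝ, a n • g (x - n) = a n • ∫ x, g x := by
    rw [integral_smul, integral_sub_right_eq_self g (n : ℝ)]
  unfold periodization
  rw [← integral_tsum_of_summable_integral_norm hint (by simpa only [hnorm] using ha.mul_right _)]
  simp_rw [hterm]
  exact ha.of_norm.tsum_smul_const _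

end Periodization

theorem ofReal_periodization (a : ℤ → ℝ) (h : ℝ → ℝ) (x : ℝ) :
    ((periodization a h x : ℝ) : ℂ) =
      periodization (fun n => (a n : ℂ)) (fun y => (h y : ℂ)) x := by
  simp only [periodization, ofReal_tsum, smul_eq_mul, ofReal_mul]

theorem periodization_pos {a : ℤ → ℝ} {h : ℝ → ℝ} {x : ℝ}
    (hs : Summable fun n : ℤ => a n * h (x - n)) (ha : ∀ n, 0 < a n) (hnn : ∀ y, 0 ≤ h y)
    (hpos : ∀ y ∈ Set.Icc (0 : ℝ) 1, 0 < h y) : 0 < periodization a h x := by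
  have hfloor : 0 < a ⌊x⌋ * h (x - ⌊x⌋) :=
    mul_pos (ha _) (hpos _ ⟨Int.fract_nonneg x, (Int.fract_lt_one x).le⟩)
  exact hfloor.trans_le (hs.le_tsum ⌊x⌋ fun n _ => mul_nonneg (ha n).le (hnn _))

theorem periodization_le_tsum {a : ℤ → ℝ} {h : ℝ → ℝ} (ha : Summable a) (ha0 : ∀ n, 0 ≤ a n)
    (hh : ∀ y, ‖h y‖ ≤ 1) (x : ℝ) : periodization a h x ≤ ∑' n, a n :=
  (summable_smul_comp_sub ha.norm hh x).tsum_le_tsum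
    (fun n => mul_le_of_le_one_right (ha0 n) ((Real.le_norm_self _).trans (hh _))) ha

theorem continuous_angularFourierIntegral {g : ℝ → ℂ} (hg : Integrable g) :
    Continuous (angularFourierIntegral g) :=
  continuous_of_dominated
    (fun _ => (Continuous.aestronglyMeasurable (by fun_prop)).mul hg.1)
    (fun _ => ae_of_all _ fun _ => by
      rw [norm_mul, norm_exp_neg_ofReal_mul_ofReal_mul_I, one_mul])
    hg.norm (ae_of_all _ fun _ => by fun_prop)

theorem angularFourierIntegral_periodization {a : ℤ → ℂ} {g : ℝ → ℂ} (ha : Summable (‖a ·‖))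
    (hg : Integrable g) (t : ℝ) :
    angularFourierIntegral (periodization a g) t =
      (∑' n : ℤ, a n * exp (-((t : ℂ) * (n : ℂ)) * I)) * angularFourierIntegral g t := by
  -- `e^{-itx} = e^{-itn} e^{-it(x-n)}`: the modulated periodization of `g` is the periodization
  -- of the modulated `g`, with modulated coefficients.
  have hmod (x : ℝ) : exp (-((t : ℂ) * x) * I) * periodization a g x =
      periodization (fun n => a n * exp (-((t : ℂ) * n) * I))
        (fun y => exp (-((t : ℂ) * y) * I) * g y) x := by
    unfold periodization
    rw [← tsum_mul_left]
    congr 1 with n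
    rw [smul_eq_mul, smul_eq_mul, show -((t : ℂ) * x) * I = -((t : ℂ) * n) * I +
      -((t : ℂ) * ((x - n : ℝ) : ℂ)) * I by push_cast; ring, exp_add]
    ring
  have hmod_int : Integrable fun y : ℝ => exp (-((t : ℂ) * y) * I) * g y :=
    hg.bdd_mul (c := 1) (Continuous.aestronglyMeasurable (by fun_prop))
      (ae_of_all _ fun y => (norm_exp_neg_ofReal_mul_ofReal_mul_I t y).le)
  have hcoef : Summable fun n : ℤ => ‖a n * exp (-((t : ℂ) * n) * I)‖ := by
    simpa only [norm_mul, ← ofReal_intCast, norm_exp_neg_ofReal_mul_ofReal_mul_I, mul_one]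
      using ha
  simp_rw [angularFourierIntegral, hmod]
  rw [integral_periodization hcoef hmod_int, smul_eq_mul]

theorem periodization_fourier_lower_bound_general
    (h : ℝ → ℝ) (hcont : Continuous h) (hsupp : HasCompactSupport h)
    (hnn : ∀ x, 0 ≤ h x) (hle : ∀ x, h x ≤ 1)
    (hpos : ∀ x ∈ Set.Icc (0 : ℝ) 1, 0 < h x)
    (hFh : ¬ MeasureTheory.Integrable (fun t : ℝ =>
      ∫ x : ℝ, Complex.exp (-((t : ℂ) * (x : ℂ)) * Complex.I) * (h x : ℂ)))
    (a : ℤ → ℝ) (hapos : ∀ n, 0 < a n) (ha0 : a 0 = 1 / 2)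
    (hasum : HasSum (fun n : {n : ℤ // n ≠ 0} => a n) (1 / 4))
    (f : ℝ → ℝ) (hf : ∀ x, f x = ∑' n : ℤ, a n * h (x - n)) :
    Continuous f ∧
    (∀ x, 0 < f x ∧ f x ≤ 3 / 4) ∧
    MeasureTheory.Integrable f ∧
    (∫ x, f x) = 3 / 4 * ∫ x, h x ∧
    (∀ t : ℝ,
      (1 / 4) * ‖∫ x : ℝ, Complex.exp (-((t : ℂ) * (x : ℂ)) * Complex.I) * (h x : ℂ)‖ ≤
        ‖∫ x : ℝ, Complex.exp (-((t : ℂ) * (x : ℂ)) * Complex.I) * (f x : ℂ)‖) ∧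
    ¬ MeasureTheory.Integrable (fun t : ℝ =>
      ∫ x : ℝ, Complex.exp (-((t : ℂ) * (x : ℂ)) * Complex.I) * (f x : ℂ)) := by
  obtain rfl : f = periodization a h := funext hf
  have hsum_a : HasSum a (3 / 4) := by
    convert hasSum_of_hasSum_subtype_ne hasum using 1
    norm_num [ha0]
  have ha : Summable (‖a ·‖) := hsum_a.summable.norm
  have hh (y : ℝ) : ‖h y‖ ≤ 1 := (Real.norm_of_nonneg (hnn y)).trans_le (hle y)
  have hint : Integrable h := hcont.integrable_of_hasCompactSupport hsupp
  have hfc : Continuous (periodization a h) := continuous_periodization ha hcont hh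
  have hbound (t : ℝ) : 1 / 4 * ‖angularFourierIntegral (fun x => (h x : ℂ)) t‖ ≤
      ‖angularFourierIntegral (fun x => ((periodization a h x : ℝ) : ℂ)) t‖ := by
    simp_rw [ofReal_periodization]
    rw [angularFourierIntegral_periodization (g := fun y => (h y : ℂ))
      (by simpa only [norm_real] using ha) hint.ofReal, norm_mul]
    gcongr
    calc (1 / 4 : ℝ) = a 0 - 1 / 4 := by norm_num [ha0]
      _ ≤ _ := sub_le_norm_tsum_ofReal_mul_exp (fun n => (hapos n).le) hasum t
  dsimp only [angularFourierIntegral] at hbound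
  refine ⟨hfc, fun x => ⟨?_, ?_⟩, integrable_periodization ha hint hfc.aestronglyMeasurable, ?_,
    hbound, fun hF => hFh ?_⟩
  · exact periodization_pos (summable_smul_comp_sub ha hh x) hapos hnn hpos
  · exact (periodization_le_tsum hsum_a.summable (fun n => (hapos n).le) hh x).trans_eq
      hsum_a.tsum_eq
  · rw [integral_periodization ha hint, hsum_a.tsum_eq, smul_eq_mul]
  · exact (hF.norm.const_mul 4).mono'
      (continuous_angularFourierIntegral hint.ofReal).aestronglyMeasurable
      (ae_of_all _ fun t => by linarith [hbound t])

/-- Periodization: if `h` is continuous with compact support, `0 ≤ h ≤ 1`, `max h = 1`,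
`h > 0` on `[0,1]`, `𝓕h ∉ L¹(ℝ)`, and `(aₙ)_{n∈ℤ}` are positive reals with `a₀ = 1/2`
and `∑_{n≠0} aₙ = 1/4`, then `f(x) = ∑_{n∈ℤ} aₙ h(x−n)` is continuous, satisfies
`0 < f ≤ 3/4`, is integrable with `∫ f = (3/4)∫ h`, satisfies
`|𝓕f(t)| ≥ (1/4)|𝓕h(t)|`, and `𝓕f ∉ L¹(ℝ)`. -/
theorem periodization_fourier_lower_bound
    (h : ℝ → ℝ) (hcont : Continuous h) (hsupp : HasCompactSupport h)
    (hnn : ∀ x, 0 ≤ h x) (hle : ∀ x, h x ≤ 1) (hmax : ∃ x₀, h x₀ = 1)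
    (hpos : ∀ x ∈ Set.Icc (0 : ℝ) 1, 0 < h x)
    (hFh : ¬ MeasureTheory.Integrable (fun t : ℝ =>
      ∫ x : ℝ, Complex.exp (-((t : ℂ) * (x : ℂ)) * Complex.I) * (h x : ℂ)))
    (a : ℤ → ℝ) (hapos : ∀ n, 0 < a n) (ha0 : a 0 = 1 / 2)
    (hasum : HasSum (fun n : {n : ℤ // n ≠ 0} => a n) (1 / 4))
    (f : ℝ → ℝ) (hf : ∀ x, f x = ∑' n : ℤ, a n * h (x - n)) :
    Continuous f ∧
    (∀ x, 0 < f x ∧ f x ≤ 3 / 4) ∧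
    MeasureTheory.Integrable f ∧
    (∫ x, f x) = 3 / 4 * ∫ x, h x ∧
    (∀ t : ℝ,
      (1 / 4) * ‖∫ x : ℝ, Complex.exp (-((t : ℂ) * (x : ℂ)) * Complex.I) * (h x : ℂ)‖ ≤
        ‖∫ x : ℝ, Complex.exp (-((t : ℂ) * (x : ℂ)) * Complex.I) * (f x : ℂ)‖) ∧
    ¬ MeasureTheory.Integrable (fun t : ℝ =>
      ∫ x : ℝ, Complex.exp (-((t : ℂ) * (x : ℂ)) * Complex.I) * (f x : ℂ)) :=
  periodization_fourier_lower_bound_general h hcont hsupp hnn hle hpos hFh a hapos ha0 hasum f hf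
end

section
/- Let h : ℝ^d × ℝ → ℂ be continuous such that (C1') for each ω ∈ ℝ^d the function h(ω,·) is a continuous positive definite integrable function on ℝ, and (C2') ∫_{ℝ^d} h(ω,0) dω < ∞. Then C(x,u) := ∫_{ℝ^d} e^{i⟨x,ω⟩} h(ω,u) dω is a continuous positive definite function on ℝ^d × ℝ ≅ ℝ^{d+1}. -/
/-!
For fixed `ω`, `u ↦ h(ω,u)` is positive definite on `ℝ`, hence so is `(x,u) ↦ h(ω,u)` on
`ℝᵈ × ℝ`, and multiplying by the character `(x,u) ↦ e^{i⟨x,ω⟩}` preserves this. Integrating a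
family of positive definite functions in `ω` yields a positive definite function, since the
quadratic forms integrate. Positive definiteness also gives `|h(ω,u)| ≤ h(ω,0)`, an integrable
bound uniform in `(x,u)`, so the integral exists and is continuous by dominated convergence.
-/
open MeasureTheory Complex ComplexConjugate

def IsPosDefFun {G : Type*} [Sub G] (f : G → ℂ) : Prop :=
  ∀ (N : ℕ) (v : Fin N → G) (c : Fin N → ℂ),
    0 ≤ (∑ i, ∑ j, f (v i - v j) * c i * conj (c j)).re ∧
    (∑ i, ∑ j, f (v i - v j) * c i * conj (c j)).im = 0

namespace IsPosDefFun

section AddGroup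

variable {G : Type*} [AddGroup G] {f : G → ℂ}

lemma re_apply_zero_nonneg (hf : IsPosDefFun f) : 0 ≤ (f 0).re := by
  simpa using (hf 1 ![0] ![1]).1

lemma im_apply_zero (hf : IsPosDefFun f) : (f 0).im = 0 := by
  simpa using (hf 1 ![0] ![1]).2

lemma apply_neg (hf : IsPosDefFun f) (t : G) : f (-t) = conj (f t) := by
  have h₁ := (hf 2 ![0, t] ![1, 1]).2
  have hI := (hf 2 ![0, t] ![1, I]).2
  simp [Fin.sum_univ_two, hf.im_apply_zero] at h₁ hI
  apply Complex.ext <;> simp <;> linarith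

/-- Testing the form on the points `0, t` with weights `‖f t‖, -conj (f t)` gives
`2 ‖f t‖² ((f 0).re - ‖f t‖) ≥ 0`. -/
lemma norm_le_re_apply_zero (hf : IsPosDefFun f) (t : G) : ‖f t‖ ≤ (f 0).re := by
  obtain ha | ha := (norm_nonneg (f t)).eq_or_lt
  · exact ha ▸ hf.re_apply_zero_nonneg
  have hnorm : f t * conj (f t) = (‖f t‖ : ℂ) ^ 2 := by
    rw [mul_conj, normSq_eq_norm_sq]; push_cast; rfl
  have hsum : ∑ i, ∑ j, f (![0, t] i - ![0, t] j) * ![(‖f t‖ : ℂ), -conj (f t)] i *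
      conj (![(‖f t‖ : ℂ), -conj (f t)] j) = ((2 * ‖f t‖ ^ 2 : ℝ) : ℂ) * (f 0 - ‖f t‖) := by
    simp [Fin.sum_univ_two, hf.apply_neg]
    linear_combination (f 0 - 2 * ‖f t‖) * hnorm
  have := (hf 2 ![0, t] ![(‖f t‖ : ℂ), -conj (f t)]).1
  rw [hsum, re_ofReal_mul, sub_re, ofReal_re] at this
  exact sub_nonneg.1 ((mul_nonneg_iff_of_pos_left (by positivity)).1 this)

lemma norm_le_norm_apply_zero (hf : IsPosDefFun f) (t : G) : ‖f t‖ ≤ ‖f 0‖ :=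
  (hf.norm_le_re_apply_zero t).trans (re_le_norm _)

lemma comp_addMonoidHom {H : Type*} [AddGroup H] {g : H → ℂ} (hg : IsPosDefFun g)
    (φ : G →+ H) : IsPosDefFun (g ∘ φ) := fun N v c => by
  simpa only [Function.comp_apply, map_sub] using hg N (φ ∘ v) c

lemma exp_ofReal_mul_I_mul (hf : IsPosDefFun f) (L : G →+ ℝ) :
    IsPosDefFun fun a => exp (L a * I) * f a := fun N v c => by
  have hterm : ∀ i j, exp (L (v i - v j) * I) * f (v i - v j) * c i * conj (c j) =
      f (v i - v j) * (exp (L (v i) * I) * c i) * conj (exp (L (v j) * I) * c j) := by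
    intro i j
    simp only [map_mul, ← exp_conj, conj_ofReal, conj_I, map_sub, ofReal_sub, sub_mul, exp_sub,
      mul_neg, exp_neg]
    ring
  simpa only [hterm] using hf N v fun i => exp (L (v i) * I) * c i

end AddGroup

lemma integral {α G : Type*} [MeasurableSpace α] {μ : Measure α} [Sub G] {F : G → α → ℂ}
    (hF : ∀ ω, IsPosDefFun (F · ω)) (hint : ∀ a, Integrable (F a) μ) :
    IsPosDefFun fun a => ∫ ω, F a ω ∂μ := fun N v c => by
  have hsum : ∑ i, ∑ j, (∫ ω, F (v i - v j) ω ∂μ) * c i * conj (c j) =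
      ∫ ω, ∑ i, ∑ j, F (v i - v j) ω * c i * conj (c j) ∂μ := by
    rw [integral_finsetSum _ fun i _ => integrable_finsetSum _ fun j _ =>
      ((hint _).mul_const _).mul_const _]
    refine Finset.sum_congr rfl fun i _ => ?_
    rw [integral_finsetSum _ fun j _ => ((hint _).mul_const _).mul_const _]
    simp only [integral_mul_const]
  have hint' : Integrable (fun ω => ∑ i, ∑ j, F (v i - v j) ω * c i * conj (c j)) μ :=
    integrable_finsetSum _ fun i _ => integrable_finsetSum _ fun j _ =>
      ((hint _).mul_const _).mul_const _
  rw [hsum, ← RCLike.re_to_complex, ← RCLike.im_to_complex, ← integral_re hint',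
    ← integral_im hint']
  exact ⟨integral_nonneg fun ω => (hF ω N v c).1,
    integral_eq_zero_of_ae (ae_of_all _ fun ω => (hF ω N v c).2)⟩

end IsPosDefFun

theorem cressie_huang_construction_general {d : ℕ} (h : (Fin d → ℝ) → ℝ → ℂ)
    (hcont : Continuous fun p : (Fin d → ℝ) × ℝ => h p.1 p.2)
    (hpd : ∀ ω : Fin d → ℝ, ∀ (N : ℕ) (u : Fin N → ℝ) (c : Fin N → ℂ),
      0 ≤ (∑ i, ∑ j, h ω (u i - u j) * c i * (starRingEnd ℂ) (c j)).re ∧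
      (∑ i, ∑ j, h ω (u i - u j) * c i * (starRingEnd ℂ) (c j)).im = 0)
    (hint0 : MeasureTheory.Integrable fun ω : Fin d → ℝ => h ω 0)
    (C : (Fin d → ℝ) × ℝ → ℂ)
    (hC : ∀ (x : Fin d → ℝ) (u : ℝ), C (x, u) =
      ∫ ω : Fin d → ℝ,
        Complex.exp (((∑ i, x i * ω i : ℝ) : ℂ) * Complex.I) * h ω u) :
    Continuous C ∧
    ∀ (N : ℕ) (v : Fin N → (Fin d → ℝ) × ℝ) (c : Fin N → ℂ),
      0 ≤ (∑ i, ∑ j, C (v i - v j) * c i * (starRingEnd ℂ) (c j)).re ∧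
      (∑ i, ∑ j, C (v i - v j) * c i * (starRingEnd ℂ) (c j)).im = 0 := by
  have hpd' : ∀ ω, IsPosDefFun (h ω) := hpd
  let L (ω : Fin d → ℝ) : (Fin d → ℝ) × ℝ →+ ℝ :=
    AddMonoidHom.mk' (fun p => ∑ i, p.1 i * ω i) fun p q => by
      simp only [Prod.fst_add, Pi.add_apply, add_mul, Finset.sum_add_distrib]
  let F (p : (Fin d → ℝ) × ℝ) (ω : Fin d → ℝ) : ℂ := exp (L ω p * I) * h ω p.2
  have hC_eq : C = fun p => ∫ ω, F p ω := funext fun p => hC p.1 p.2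
  have hF_cont : Continuous (Function.uncurry F) :=
    (by fun_prop : Continuous fun q : ((Fin d → ℝ) × ℝ) × (Fin d → ℝ) =>
      exp ((∑ i, q.1.1 i * q.2 i : ℝ) * I)).mul (hcont.comp
      (by fun_prop : Continuous fun q : ((Fin d → ℝ) × ℝ) × (Fin d → ℝ) => (q.2, q.1.2)))
  have hF_meas (p) : AEStronglyMeasurable (F p) := (hF_cont.uncurry_left p).aestronglyMeasurable
  have hF_le (p) : ∀ᵐ ω, ‖F p ω‖ ≤ ‖h ω 0‖ := ae_of_all _ fun ω => by
    simpa [F, norm_exp_ofReal_mul_I] using (hpd' ω).norm_le_norm_apply_zero p.2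
  refine ⟨?_, ?_⟩
  · rw [hC_eq]
    exact continuous_of_dominated hF_meas hF_le hint0.norm
      (ae_of_all _ fun ω => hF_cont.uncurry_right ω)
  · rw [hC_eq]
    refine IsPosDefFun.integral (fun ω => ?_) fun p => hint0.norm.mono' (hF_meas p) (hF_le p)
    exact ((hpd' ω).comp_addMonoidHom (AddMonoidHom.snd (Fin d → ℝ) ℝ)).exp_ofReal_mul_I_mul (L ω)

/-- Cressie–Huang construction: if `h : ℝᵈ × ℝ → ℂ` is continuous, `h(ω,·)` is a
continuous positive definite integrable function on `ℝ` for each `ω`, and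
`ω ↦ h(ω,0)` is integrable on `ℝᵈ`, then
`C(x,u) = ∫ e^{i⟨x,ω⟩} h(ω,u) dω` is a continuous positive definite function on
`ℝᵈ × ℝ`. -/
theorem cressie_huang_construction {d : ℕ} (h : (Fin d → ℝ) → ℝ → ℂ)
    (hcont : Continuous fun p : (Fin d → ℝ) × ℝ => h p.1 p.2)
    (hpd : ∀ ω : Fin d → ℝ, ∀ (N : ℕ) (u : Fin N → ℝ) (c : Fin N → ℂ),
      0 ≤ (∑ i, ∑ j, h ω (u i - u j) * c i * (starRingEnd ℂ) (c j)).re ∧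
      (∑ i, ∑ j, h ω (u i - u j) * c i * (starRingEnd ℂ) (c j)).im = 0)
    (hint : ∀ ω : Fin d → ℝ, MeasureTheory.Integrable (h ω))
    (hint0 : MeasureTheory.Integrable fun ω : Fin d → ℝ => h ω 0)
    (C : (Fin d → ℝ) × ℝ → ℂ)
    (hC : ∀ (x : Fin d → ℝ) (u : ℝ), C (x, u) =
      ∫ ω : Fin d → ℝ,
        Complex.exp (((∑ i, x i * ω i : ℝ) : ℂ) * Complex.I) * h ω u) :
    Continuous C ∧
    ∀ (N : ℕ) (v : Fin N → (Fin d → ℝ) × ℝ) (c : Fin N → ℂ),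
      0 ≤ (∑ i, ∑ j, C (v i - v j) * c i * (starRingEnd ℂ) (c j)).re ∧
      (∑ i, ∑ j, C (v i - v j) * c i * (starRingEnd ℂ) (c j)).im = 0 :=
  cressie_huang_construction_general h hcont hpd hint0 C hC
end

section
/- Let f : ℝ^n → ℂ be continuous and integrable with Fourier transform 𝓕f(ξ) = ∫ e^{−i⟨ξ,x⟩} f(x) dx satisfying 𝓕f(ξ) ≥ 0 for all ξ ∈ ℝ^n. Then f is positive definite, 𝓕f ∈ L¹(ℝ^n), and f(x) = (2π)^{−n} ∫ e^{i⟨x,ξ⟩} 𝓕f(ξ) dξ for every x ∈ ℝ^n. -/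
/-!
Damping `𝓕 g` by the Gaussian `exp (-‖w‖² / c)` and moving the Fourier transform onto the
Gaussian turns `∫ exp (-‖w‖² / c) 𝓕 g w dw` into an average of `g` against a heat kernel, which
tends to `g 0` as `c → ∞` by continuity at `0`. When `𝓕 g ≥ 0` these integrals are the `L¹`
norms of the damped functions, so Fatou's lemma makes `𝓕 g` integrable, and Fourier inversion
gives `g = 𝓕⁻ (𝓕 g)`. Positive definiteness then follows from
`∑ᵢ ∑ⱼ 𝓕⁻ G (vᵢ - vⱼ) cᵢ c̄ⱼ = ∫ |∑ᵢ cᵢ 𝐞 ⟪w, vᵢ⟫|² G w dw ≥ 0`.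
The statement on `ℝⁿ` is transported from `EuclideanSpace ℝ (Fin n)`, where `F ξ = 𝓕 g (ξ / 2π)`.
-/

open MeasureTheory Filter Complex Real Module ComplexConjugate
open scoped Topology FourierTransform RealInnerProductSpace ComplexOrder

def IsPositiveDefinite {E : Type*} [Sub E] (f : E → ℂ) : Prop :=
  ∀ (N : ℕ) (v : Fin N → E) (c : Fin N → ℂ), 0 ≤ ∑ i, ∑ j, f (v i - v j) * c i * conj (c j)

theorem IsPositiveDefinite.comp_map_sub {E E' : Type*} [Sub E] [Sub E'] {f : E' → ℂ}
    (hf : IsPositiveDefinite f) {φ : E → E'} (hφ : ∀ x y, φ (x - y) = φ x - φ y) :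
    IsPositiveDefinite (f ∘ φ) := fun N v c ↦ by
  simpa only [Function.comp_apply, hφ] using hf N (φ ∘ v) c

theorem integrable_of_tendsto_of_tendsto_integral_norm {α E : Type*} [MeasurableSpace α]
    {μ : Measure α} [NormedAddCommGroup E] {G : ℕ → α → E} {F : α → E} {a : ℝ}
    (hG : ∀ n, Integrable (G n) μ) (hGF : ∀ᵐ x ∂μ, Tendsto (fun n ↦ G n x) atTop (𝓝 (F x)))
    (ha : Tendsto (fun n ↦ ∫ x, ‖G n x‖ ∂μ) atTop (𝓝 a)) : Integrable F μ := by
  refine ⟨aestronglyMeasurable_of_tendsto_ae atTop (fun n ↦ (hG n).1) hGF, ?_⟩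
  have fatou : ∫⁻ x, ‖F x‖ₑ ∂μ ≤ liminf (fun n ↦ ∫⁻ x, ‖G n x‖ₑ ∂μ) atTop :=
    lintegral_congr_ae (by filter_upwards [hGF] with x hx using hx.enorm.liminf_eq) ▸
      lintegral_liminf_le' fun n ↦ (hG n).1.enorm
  have hlim : liminf (fun n ↦ ∫⁻ x, ‖G n x‖ₑ ∂μ) atTop = ENNReal.ofReal a := by
    simp_rw [← ofReal_integral_norm_eq_lintegral_enorm (hG _)]
    exact (ENNReal.tendsto_ofReal ha).liminf_eq
  exact fatou.trans_lt (hlim ▸ ENNReal.ofReal_lt_top)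

section InnerProductSpace

variable {V E : Type*} [NormedAddCommGroup V] [InnerProductSpace ℝ V] [MeasurableSpace V]
  [BorelSpace V] [FiniteDimensional ℝ V] [NormedAddCommGroup E] [NormedSpace ℂ E]

theorem isPositiveDefinite_fourierInv {G : V → ℂ} (hG : Integrable G) (hG0 : 0 ≤ G) :
    IsPositiveDefinite (𝓕⁻ G) := by
  intro N v c
  set e : V → V → ℂ := fun w x ↦ 𝐞 ⟪w, x⟫
  have he : ∀ w x y, e w (x - y) = e w x * conj (e w y) := fun w x y ↦ by
    simp only [e, inner_sub_right, AddChar.map_sub_eq_div, div_eq_mul_inv, Circle.coe_mul,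
      Circle.coe_inv_eq_conj]
  have hint : ∀ i j, Integrable fun w ↦ e w (v i - v j) * G w * (c i * conj (c j)) := by
    intro i j
    refine (hG.bdd_mul (c := 1) ?_ (ae_of_all _ fun w ↦ (Circle.norm_coe _).le)).mul_const _
    exact (Continuous.aestronglyMeasurable (by fun_prop))
  set S : V → ℂ := fun w ↦ ∑ i, c i * e w (v i)
  calc (0 : ℂ) ≤ ∫ w, S w * conj (S w) * G w :=
        integral_nonneg fun w ↦ mul_nonneg (mul_star_self_nonneg _) (hG0 w)
    _ = ∫ w, ∑ i, ∑ j, e w (v i - v j) * G w * (c i * conj (c j)) := by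
        congr with w
        simp only [S, he, map_sum, map_mul, Finset.sum_mul, Finset.mul_sum]
        rw [Finset.sum_comm]
        exact Finset.sum_congr rfl fun i _ ↦ Finset.sum_congr rfl fun j _ ↦ by ring
    _ = _ := by
        rw [integral_finsetSum _ fun i _ ↦ integrable_finsetSum _ fun j _ ↦ hint i j]
        refine Finset.sum_congr rfl fun i _ ↦ ?_
        rw [integral_finsetSum _ fun j _ ↦ hint i j]
        refine Finset.sum_congr rfl fun j _ ↦ ?_
        simp only [fourierInv_eq, mul_assoc, ← integral_mul_const, e, Circle.smul_def, smul_eq_mul]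

theorem fourierInv_eq_integral_smul (h : V → E) (v : V) :
    𝓕⁻ h v = ((2 * π) ^ finrank ℝ V)⁻¹ • ∫ ξ, cexp (⟪ξ, v⟫ * I) • h ((2 * π)⁻¹ • ξ) := by
  have hscale :
      ∫ ξ, cexp (⟪ξ, v⟫ * I) • h ((2 * π)⁻¹ • ξ) = (2 * π) ^ finrank ℝ V • 𝓕⁻ h v := by
    rw [fourierInv_eq', ← abs_of_pos (by positivity : (0 : ℝ) < (2 * π) ^ finrank ℝ V),
      ← inv_inv ((2 * π) ^ finrank ℝ V), ← inv_pow,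
      ← Measure.integral_comp_smul volume (fun w ↦ cexp (↑(2 * π * ⟪w, v⟫) * I) • h w)]
    congr with ξ
    rw [real_inner_smul_left, ← mul_assoc, mul_inv_cancel₀ two_pi_pos.ne', one_mul]
  rw [hscale, inv_smul_smul₀ (by positivity)]

theorem integrable_exp_neg_mul_sq_norm {b : ℝ} (hb : 0 < b) :
    Integrable fun w : V ↦ Real.exp (-b * ‖w‖ ^ 2) := by
  refine (GaussianFourier.integrable_cexp_neg_mul_sq_norm_add (b := b) (by simpa) 0 (0 : V)).norm
    |>.congr (ae_of_all _ fun w ↦ ?_)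
  simp [← ofReal_pow, ← ofReal_mul, ← ofReal_neg, ← ofReal_exp]

theorem tendsto_integral_exp_sq_smul_fourier [CompleteSpace E] {g : V → E} (hg : Integrable g)
    (hg0 : ContinuousAt g 0) :
    Tendsto (fun c : ℝ ↦ ∫ w : V, Real.exp (-c⁻¹ * ‖w‖ ^ 2) • 𝓕 g w) atTop (𝓝 (g 0)) := by
  refine (tendsto_integral_gaussian_smul' hg hg0).congr' ?_
  filter_upwards [Ioi_mem_atTop 0] with c (hc : 0 < c)
  set gauss : V → ℂ := fun w ↦ cexp (-(c : ℂ)⁻¹ * ‖w‖ ^ 2 + 2 * π * I * ⟪(0 : V), w⟫)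
  have hgauss : Integrable gauss :=
    GaussianFourier.integrable_cexp_neg_mul_sq_norm_add (by simpa) _ _
  calc _ = ∫ w, 𝓕 gauss w • g w := by
        congr with w
        rw [fourier_gaussian_innerProductSpace' (by simpa)]
        congr 3 <;> field_simp
    _ = ∫ w, gauss w • 𝓕 g w := by
        simpa using! VectorFourier.integral_fourierIntegral_smul_eq_flip (L := innerₗ V)
          Real.continuous_fourierChar continuous_inner hgauss hg
    _ = _ := by
        congr with w
        simp [gauss, ← Complex.coe_smul]

theorem integrable_fourier_of_nonneg {g : V → ℂ} (hg : Integrable g) (hg0 : ContinuousAt g 0)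
    (hnn : 0 ≤ 𝓕 g) : Integrable (𝓕 g) := by
  set G : ℕ → V → ℂ := fun n w ↦ Real.exp (-((n : ℝ) + 1)⁻¹ * ‖w‖ ^ 2) • 𝓕 g w
  have hshift : Tendsto (fun n : ℕ ↦ (n : ℝ) + 1) atTop atTop :=
    tendsto_atTop_add_const_right _ 1 tendsto_natCast_atTop_atTop
  have hG : ∀ n, Integrable (G n) := fun n ↦
    (integrable_exp_neg_mul_sq_norm (by positivity)).smul_of_top_left
      (memLp_top_of_bound (VectorFourier.fourierIntegral_continuous Real.continuous_fourierChar
        continuous_inner hg).aestronglyMeasurable _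
        (ae_of_all _ fun w ↦ VectorFourier.norm_fourierIntegral_le_integral_norm _ _ _ _ _))
  have hGF : ∀ w, Tendsto (fun n ↦ G n w) atTop (𝓝 (𝓕 g w)) := fun w ↦ by
    have hexp : Tendsto (fun n : ℕ ↦ -((n : ℝ) + 1)⁻¹ * ‖w‖ ^ 2) atTop (𝓝 0) := by
      simpa using (tendsto_inv_atTop_zero.comp hshift).neg.mul_const (‖w‖ ^ 2)
    simpa only [Real.exp_zero, one_smul] using hexp.rexp.smul_const (𝓕 g w)
  have hlim : Tendsto (fun n ↦ ∫ w, G n w) atTop (𝓝 (g 0)) :=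
    (tendsto_integral_exp_sq_smul_fourier hg hg0).comp hshift
  have hnorm : ∀ n, ∫ w, ‖G n w‖ = (∫ w, G n w).re := fun n ↦ by
    rw [← RCLike.re_eq_complex_re, ← integral_re (hG n)]
    exact integral_congr_ae (ae_of_all _ fun w ↦
      (re_eq_norm.2 (smul_nonneg (Real.exp_pos _).le (hnn w))).symm)
  refine integrable_of_tendsto_of_tendsto_integral_norm hG (ae_of_all _ hGF) (a := (g 0).re) ?_
  simpa only [hnorm, Function.comp_def] using (continuous_re.tendsto _).comp hlim

end InnerProductSpace

section EuclideanSpace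

variable {E : Type*} [NormedAddCommGroup E] [NormedSpace ℂ E] {ι : Type*} [Fintype ι]

theorem integral_euclideanSpace_eq_integral_toLp (φ : EuclideanSpace ℝ ι → E) :
    ∫ w, φ w = ∫ x : ι → ℝ, φ (WithLp.toLp 2 x) :=
  ((PiLp.volume_preserving_toLp ι).integral_comp
    (MeasurableEquiv.toLp 2 (ι → ℝ)).measurableEmbedding φ).symm

theorem fourierInv_toLp_eq (h : EuclideanSpace ℝ ι → E) (x : ι → ℝ) :
    𝓕⁻ h (WithLp.toLp 2 x) = ((2 * π) ^ Fintype.card ι)⁻¹ •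
      ∫ ξ : ι → ℝ, cexp ((∑ i, x i * ξ i : ℝ) * I) • h ((2 * π)⁻¹ • WithLp.toLp 2 ξ) := by
  rw [fourierInv_eq_integral_smul, finrank_euclideanSpace, integral_euclideanSpace_eq_integral_toLp]
  simp [EuclideanSpace.inner_toLp_toLp, dotProduct]

theorem fourier_comp_ofLp_smul_toLp (f : (ι → ℝ) → E) (ξ : ι → ℝ) :
    𝓕 (f ∘ WithLp.ofLp : EuclideanSpace ℝ ι → E) ((2 * π)⁻¹ • WithLp.toLp 2 ξ) =
      ∫ x : ι → ℝ, cexp (-(∑ i, ξ i * x i : ℝ) * I) • f x := by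
  rw [fourier_eq', integral_euclideanSpace_eq_integral_toLp]
  congr with x
  rw [Function.comp_apply, WithLp.ofLp_toLp, real_inner_smul_right,
    EuclideanSpace.inner_toLp_toLp, star_trivial]
  field_simp
  simp [dotProduct, mul_comm I]

end EuclideanSpace

/-- Integrable Bochner theorem on `ℝⁿ`: if `f : ℝⁿ → ℂ` is continuous and integrable
with Fourier transform `𝓕f(ξ) = ∫ e^{−i⟨ξ,x⟩} f(x) dx` nonnegative everywhere, then
`f` is positive definite, `𝓕f ∈ L¹(ℝⁿ)` and
`f(x) = (2π)^{−n} ∫ e^{i⟨x,ξ⟩} 𝓕f(ξ) dξ` for every `x`. -/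
theorem integrable_bochner_euclidean {n : ℕ} (f : (Fin n → ℝ) → ℂ)
    (hf : Continuous f) (hint : MeasureTheory.Integrable f)
    (F : (Fin n → ℝ) → ℂ)
    (hF : ∀ ξ : Fin n → ℝ, F ξ =
      ∫ x : Fin n → ℝ, Complex.exp (-((∑ i, ξ i * x i : ℝ) : ℂ) * Complex.I) * f x)
    (hFnn : ∀ ξ : Fin n → ℝ, 0 ≤ (F ξ).re ∧ (F ξ).im = 0) :
    (∀ (N : ℕ) (v : Fin N → Fin n → ℝ) (c : Fin N → ℂ),
      0 ≤ (∑ i, ∑ j, f (v i - v j) * c i * (starRingEnd ℂ) (c j)).re ∧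
      (∑ i, ∑ j, f (v i - v j) * c i * (starRingEnd ℂ) (c j)).im = 0) ∧
    MeasureTheory.Integrable F ∧
    ∀ x : Fin n → ℝ, f x = (((2 * Real.pi) ^ n : ℝ) : ℂ)⁻¹ *
      ∫ ξ : Fin n → ℝ, Complex.exp (((∑ i, x i * ξ i : ℝ) : ℂ) * Complex.I) * F ξ := by
  set g : EuclideanSpace ℝ (Fin n) → ℂ := f ∘ WithLp.ofLp
  have hg : Continuous g := hf.comp (PiLp.continuous_ofLp 2 _)
  have hg1 : Integrable g :=
    ((PiLp.volume_preserving_ofLp _).integrable_comp_emb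
      (MeasurableEquiv.toLp 2 (Fin n → ℝ)).symm.measurableEmbedding).2 hint
  have hFg : ∀ ξ, F ξ = 𝓕 g ((2 * π)⁻¹ • WithLp.toLp 2 ξ) := fun ξ ↦ by
    simp only [hF, g, fourier_comp_ofLp_smul_toLp, smul_eq_mul]
  have hnn : 0 ≤ 𝓕 g := fun η ↦ by
    have hη : (2 * π)⁻¹ • WithLp.toLp 2 ((2 * π) • η).ofLp = η := by
      rw [WithLp.toLp_ofLp, smul_smul, inv_mul_cancel₀ two_pi_pos.ne', one_smul]
    rw [← hη, ← hFg]
    exact Complex.nonneg_iff.2 ⟨(hFnn _).1, (hFnn _).2.symm⟩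
  have hgF : Integrable (𝓕 g) := integrable_fourier_of_nonneg hg1 hg.continuousAt hnn
  have hinv : 𝓕⁻ (𝓕 g) = g := hg.fourierInv_fourier_eq hg1 hgF
  refine ⟨fun N v c ↦ ?_, ?_, fun x ↦ ?_⟩
  · have hpos : IsPositiveDefinite g := hinv ▸ isPositiveDefinite_fourierInv hgF hnn
    exact (Complex.nonneg_iff.1 (hpos.comp_map_sub (WithLp.toLp_sub 2) N v c)).imp_right Eq.symm
  · rw [funext hFg]
    exact ((PiLp.volume_preserving_toLp (Fin n)).integrable_comp_emb
      (MeasurableEquiv.toLp 2 _).measurableEmbedding).2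
        (hgF.comp_smul (inv_ne_zero two_pi_pos.ne'))
  · calc f x = 𝓕⁻ (𝓕 g) (WithLp.toLp 2 x) := by rw [hinv]; rfl
      _ = _ := by
        simp only [fourierInv_toLp_eq, hFg, Fintype.card_fin, smul_eq_mul, real_smul, ofReal_inv]
end
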